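/- On the N-dimensional torus system with position PVM Q = {|n⟩⟨n|} and momentum PVM P = {|k̄⟩⟨k̄|} with circular metrics d_Q, d_P scaled by 2π/N, every state ρ and ε₁,ε₂ ∈ [0,1] with ε₁+ε₂ ≤ 1 satisfy (W_{ε₁}(ρ^Q) + 2π/N)·(W_{ε₂}(ρ^P) + 2π/N) ≥ (2π)²/N · (1-ε₁-ε₂)². -/

import Mathlib

open scoped ComplexOrder

/-- Operator norm of a matrix, viewed as an operator on Euclidean space. -/
noncomputable def opNorm {N : ℕ} (A : Matrix (Fin N) (Fin N) ℂ) : ℝ :=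
  ‖Matrix.toEuclideanCLM (𝕜 := ℂ) A‖

/-- An orthogonal projection. -/
def IsProjection {N : ℕ} (A : Matrix (Fin N) (Fin N) ℂ) : Prop :=
  A.IsHermitian ∧ A * A = A

/-- A density operator: positive semidefinite with trace one. -/
def IsDensity {N : ℕ} (ρ : Matrix (Fin N) (Fin N) ℂ) : Prop :=
  ρ.PosSemidef ∧ ρ.trace = 1

open Real

/-- Ball O_d(x,w) = {y : d(x,y) ≤ w/2} for a distance function d. -/
noncomputable def ballF {Ω : Type*} [Fintype Ω] (d : Ω → Ω → ℝ) (x : Ω) (w : ℝ) :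
    Finset Ω :=
  Finset.univ.filter (fun y => d x y ≤ w / 2)

/-- Overall width at confidence level 1-ε with respect to distance d. -/
noncomputable def widthF {Ω : Type*} [Fintype Ω] (d : Ω → Ω → ℝ) (ε : ℝ)
    (p : Ω → ℝ) : ℝ :=
  sInf {w : ℝ | 0 < w ∧ ∃ x : Ω, 1 - ε ≤ ∑ y ∈ ballF d x w, p y}

/-- The symmetrized circular distance on Z_N scaled by 2π/N. -/
noncomputable def torusDist (N : ℕ) (m n : Fin N) : ℝ :=
  (2 * Real.pi / N) * (min ((m.val + N - n.val) % N) ((n.val + N - m.val) % N) : ℕ)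

/-- The position projection |n⟩⟨n|. -/
def posProj (N : ℕ) (n : Fin N) : Matrix (Fin N) (Fin N) ℂ :=
  Matrix.single n n 1

/-- The momentum basis vector |k̄⟩ = (1/√N) Σₙ e^{-2πikn/N}|n⟩. -/
noncomputable def fourierKet (N : ℕ) (k : Fin N) : Fin N → ℂ :=
  fun n => (1 / Real.sqrt N : ℝ) *
    Complex.exp (-(2 * Real.pi * Complex.I * (k : ℕ) * (n : ℕ)) / N)

/-- The momentum projection |k̄⟩⟨k̄|. -/
noncomputable def fourierProj (N : ℕ) (k : Fin N) : Matrix (Fin N) (Fin N) ℂ :=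
  Matrix.of fun a b => fourierKet N k a * star (fourierKet N k b)


-- key geometric sum lemma
lemma sum_exp_fin (N : ℕ) (hN : 0 < N) (m : ℤ) :
    ∑ b : Fin N, Complex.exp (2 * Real.pi * Complex.I * m * b / N) =
      if (N:ℤ) ∣ m then (N:ℂ) else 0 := by
  have hNC : (N:ℂ) ≠ 0 := Nat.cast_ne_zero.mpr hN.ne'
  set z : ℂ := Complex.exp (2 * Real.pi * Complex.I * m / N) with hz
  have hterm : ∀ b : Fin N, Complex.exp (2 * Real.pi * Complex.I * m * b / N) = z ^ (b:ℕ) := by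
    intro b
    rw [hz, ← Complex.exp_nat_mul]
    ring_nf
  rw [Finset.sum_congr rfl (fun b _ => hterm b), Fin.sum_univ_eq_sum_range]
  by_cases hdvd : (N:ℤ) ∣ m
  · obtain ⟨q, rfl⟩ := hdvd
    have hz1 : z = 1 := by
      rw [hz]
      have : 2 * Real.pi * Complex.I * (↑(N * q) : ℤ) / N = (q:ℤ) * (2 * Real.pi * Complex.I) := by
        push_cast
        field_simp
      rw [this, Complex.exp_int_mul_two_pi_mul_I]
    simp [hz1]
  · have hzN : z ^ N = 1 := by
      rw [hz, ← Complex.exp_nat_mul]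
      have : (N:ℂ) * (2 * Real.pi * Complex.I * m / N) = (m:ℤ) * (2 * Real.pi * Complex.I) := by
        push_cast; field_simp
      rw [this, Complex.exp_int_mul_two_pi_mul_I]
    have hz1 : z ≠ 1 := by
      rw [hz, Ne, Complex.exp_eq_one_iff]
      rintro ⟨n, hn⟩
      apply hdvd
      have h2 : (2 * Real.pi * Complex.I) ≠ 0 := by
        simp [Real.pi_ne_zero, Complex.I_ne_zero]
      have : (m : ℂ) = n * N := by
        field_simp at hn
        have hn' : (2 * Real.pi * Complex.I) * m = (2 * Real.pi * Complex.I) * (n * N) := by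
          linear_combination (2 * Real.pi * Complex.I) * hn
        exact mul_left_cancel₀ h2 hn'
      have : (m : ℤ) = n * N := by exact_mod_cast this
      exact ⟨n, by linarith⟩
    rw [geom_sum_eq hz1, hzN]
    simp [if_neg hdvd]

lemma star_fourierKet (N : ℕ) (k : Fin N) (n : Fin N) :
    star (fourierKet N k n) = (1 / Real.sqrt N : ℝ) *
      Complex.exp ((2 * Real.pi * Complex.I * (k : ℕ) * (n : ℕ)) / N) := by
  unfold fourierKet
  rw [Complex.star_def, map_mul, Complex.conj_ofReal, ← Complex.exp_conj]
  congr 1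
  simp only [map_div₀, map_neg, map_mul, Complex.conj_ofReal, Complex.conj_I,
    map_ofNat, map_natCast]
  ring

lemma fourier_inner (N : ℕ) (hN : 0 < N) (k l : Fin N) :
    ∑ b : Fin N, star (fourierKet N k b) * fourierKet N l b
      = if k = l then 1 else 0 := by
  have hNR : (0:ℝ) < N := Nat.cast_pos.mpr hN
  have hsq : (Real.sqrt N) * (Real.sqrt N) = N := Real.mul_self_sqrt hNR.le
  set m : ℤ := (k:ℤ) - (l:ℤ) with hm
  have hterm : ∀ b : Fin N, star (fourierKet N k b) * fourierKet N l b
      = (1 / N : ℝ) * Complex.exp (2 * Real.pi * Complex.I * (m:ℂ) * b / N) := by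
    intro b
    rw [star_fourierKet]
    unfold fourierKet
    have h1 : ((1 / Real.sqrt N : ℝ) : ℂ) * ((1 / Real.sqrt N : ℝ) : ℂ) = ((1/N : ℝ) : ℂ) := by
      rw [← Complex.ofReal_mul]
      congr 1
      rw [div_mul_div_comm, one_mul, hsq]
    have h2 : 2 * Real.pi * Complex.I * (k : ℕ) * (b : ℕ) / N +
        -(2 * Real.pi * Complex.I * (l : ℕ) * (b : ℕ)) / N
        = 2 * Real.pi * Complex.I * (m:ℂ) * b / N := by
      rw [hm]
      push_cast
      ring
    calc ((1 / Real.sqrt N : ℝ) : ℂ) * Complex.exp (2 * Real.pi * Complex.I * (k : ℕ) * (b : ℕ) / N) *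
          (((1 / Real.sqrt N : ℝ) : ℂ) * Complex.exp (-(2 * Real.pi * Complex.I * (l : ℕ) * (b : ℕ)) / N))
        = ((1 / Real.sqrt N : ℝ) : ℂ) * ((1 / Real.sqrt N : ℝ) : ℂ) *
            Complex.exp (2 * Real.pi * Complex.I * (k : ℕ) * (b : ℕ) / N +
              -(2 * Real.pi * Complex.I * (l : ℕ) * (b : ℕ)) / N) := by
          rw [Complex.exp_add]; ring
      _ = _ := by rw [h1, h2]
  rw [Finset.sum_congr rfl (fun b _ => hterm b), ← Finset.mul_sum, sum_exp_fin N hN]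
  have hdvd : ((N:ℤ) ∣ m) ↔ k = l := by
    constructor
    · intro ⟨q, hq⟩
      have hk := k.isLt
      have hl := l.isLt
      have : (k:ℤ) = (l:ℤ) := by
        rcases lt_trichotomy q 0 with h|h|h
        · nlinarith [hk, hl]
        · simp [h] at hq; omega
        · nlinarith
      exact Fin.ext (by exact_mod_cast this)
    · rintro rfl; simp [hm]
  by_cases hkl : k = l
  · rw [if_pos (hdvd.mpr hkl), if_pos hkl]
    push_cast
    field_simp
  · rw [if_neg (fun h => hkl (hdvd.mp h)), if_neg hkl]
    simp

lemma normSq_fourierKet (N : ℕ) (hN : 0 < N) (k n : Fin N) :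
    fourierKet N k n * star (fourierKet N k n) = ((1 / N : ℝ) : ℂ) := by
  rw [mul_comm]
  have := fourier_inner N hN k k
  rw [if_pos rfl] at this
  have hsum : ∀ b : Fin N, star (fourierKet N k b) * fourierKet N k b = ((1/N:ℝ):ℂ) := by
    intro b
    rw [star_fourierKet]
    unfold fourierKet
    have hNR : (0:ℝ) < N := Nat.cast_pos.mpr hN
    have hsq : (Real.sqrt N) * (Real.sqrt N) = N := Real.mul_self_sqrt hNR.le
    have h0 : 2 * Real.pi * Complex.I * (k : ℕ) * (b : ℕ) / N +
        -(2 * Real.pi * Complex.I * (k : ℕ) * (b : ℕ)) / N = 0 := by ring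
    calc ((1 / Real.sqrt N : ℝ) : ℂ) * Complex.exp (2 * Real.pi * Complex.I * (k : ℕ) * (b : ℕ) / N) *
          (((1 / Real.sqrt N : ℝ) : ℂ) * Complex.exp (-(2 * Real.pi * Complex.I * (k : ℕ) * (b : ℕ)) / N))
        = ((1 / Real.sqrt N : ℝ) : ℂ) * ((1 / Real.sqrt N : ℝ) : ℂ) *
            Complex.exp (2 * Real.pi * Complex.I * (k : ℕ) * (b : ℕ) / N +
              -(2 * Real.pi * Complex.I * (k : ℕ) * (b : ℕ)) / N) := by
          rw [Complex.exp_add]; ring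
      _ = _ := by
          rw [h0, Complex.exp_zero, mul_one, ← Complex.ofReal_mul]
          congr 1
          rw [div_mul_div_comm, one_mul, hsq]
  exact hsum n

-- single projection product
lemma fourierProj_mul (N : ℕ) (hN : 0 < N) (k l : Fin N) :
    fourierProj N k * fourierProj N l = if k = l then fourierProj N k else 0 := by
  ext a b
  rw [Matrix.mul_apply]
  have : ∀ c, fourierProj N k a c * fourierProj N l c b
      = (star (fourierKet N k c) * fourierKet N l c) * (fourierKet N k a * star (fourierKet N l b)) := by
    intro c; simp [fourierProj]; ring
  rw [Finset.sum_congr rfl (fun c _ => this c), ← Finset.sum_mul, fourier_inner N hN]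
  by_cases hkl : k = l
  · subst hkl; simp [fourierProj]
  · simp [hkl]

lemma fourierProj_diag (N : ℕ) (hN : 0 < N) (k n : Fin N) :
    fourierProj N k n n = ((1 / N : ℝ) : ℂ) := by
  show fourierKet N k n * star (fourierKet N k n) = _
  exact normSq_fourierKet N hN k n

lemma sum_fourierProj (N : ℕ) (hN : 0 < N) :
    ∑ k : Fin N, fourierProj N k = 1 := by
  ext a b
  rw [Matrix.sum_apply]
  have hterm : ∀ k : Fin N, fourierProj N k a b
      = (1 / N : ℝ) * Complex.exp (2 * Real.pi * Complex.I * (((b:ℤ) - (a:ℤ) : ℤ):ℂ) * k / N) := by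
    intro k
    show fourierKet N k a * star (fourierKet N k b) = _
    rw [star_fourierKet]
    unfold fourierKet
    have hNR : (0:ℝ) < N := Nat.cast_pos.mpr hN
    have hsq : (Real.sqrt N) * (Real.sqrt N) = N := Real.mul_self_sqrt hNR.le
    have h1 : ((1 / Real.sqrt N : ℝ) : ℂ) * ((1 / Real.sqrt N : ℝ) : ℂ) = ((1/N : ℝ) : ℂ) := by
      rw [← Complex.ofReal_mul]
      congr 1
      rw [div_mul_div_comm, one_mul, hsq]
    have h2 : -(2 * Real.pi * Complex.I * (k : ℕ) * (a : ℕ)) / N +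
        2 * Real.pi * Complex.I * (k : ℕ) * (b : ℕ) / N
        = 2 * Real.pi * Complex.I * (((b:ℤ) - (a:ℤ) : ℤ):ℂ) * k / N := by
      push_cast
      ring
    calc ((1 / Real.sqrt N : ℝ) : ℂ) * Complex.exp (-(2 * Real.pi * Complex.I * (k : ℕ) * (a : ℕ)) / N) *
          (((1 / Real.sqrt N : ℝ) : ℂ) * Complex.exp (2 * Real.pi * Complex.I * (k : ℕ) * (b : ℕ) / N))
        = ((1 / Real.sqrt N : ℝ) : ℂ) * ((1 / Real.sqrt N : ℝ) : ℂ) *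
            Complex.exp (-(2 * Real.pi * Complex.I * (k : ℕ) * (a : ℕ)) / N +
              2 * Real.pi * Complex.I * (k : ℕ) * (b : ℕ) / N) := by
          rw [Complex.exp_add]; ring
      _ = _ := by rw [h1, h2]
  rw [Finset.sum_congr rfl (fun c _ => hterm c), ← Finset.mul_sum, sum_exp_fin N hN]
  have hdvd : ((N:ℤ) ∣ ((b:ℤ) - (a:ℤ))) ↔ a = b := by
    constructor
    · intro ⟨q, hq⟩
      have hk := a.isLt
      have hl := b.isLt
      have : (a:ℤ) = (b:ℤ) := by
        rcases lt_trichotomy q 0 with h|h|h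
        · nlinarith
        · simp [h] at hq; omega
        · nlinarith
      exact Fin.ext (by exact_mod_cast this)
    · rintro rfl; simp
  by_cases hab : a = b
  · rw [if_pos (hdvd.mpr hab)]
    subst hab
    push_cast
    rw [Matrix.one_apply_eq]
    field_simp
  · rw [if_neg (fun h => hab (hdvd.mp h)), Matrix.one_apply_ne hab]
    simp

section Bmat
open Matrix
variable {N : ℕ}

/-- sum of squared entries norm lemma -/
noncomputable def sqnormv (v : Fin N → ℂ) : ℝ := ∑ i, Complex.normSq (v i)

lemma sqnormv_nonneg (v : Fin N → ℂ) : 0 ≤ sqnormv v :=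
  Finset.sum_nonneg fun i _ => Complex.normSq_nonneg _

lemma sqnormv_eq_zero {v : Fin N → ℂ} (h : sqnormv v = 0) : v = 0 := by
  funext i
  have := (Finset.sum_eq_zero_iff_of_nonneg (fun i _ => Complex.normSq_nonneg (v i))).mp h i
    (Finset.mem_univ i)
  exact Complex.normSq_eq_zero.mp this

lemma sqnorm_mulVec_le (M : Matrix (Fin N) (Fin N) ℂ) (w : Fin N → ℂ) :
    sqnormv (M *ᵥ w) ≤ (∑ i, ∑ j, Complex.normSq (M i j)) * sqnormv w := by
  unfold sqnormv
  rw [Finset.sum_mul]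
  apply Finset.sum_le_sum
  intro i _
  rw [Matrix.mulVec, dotProduct]
  have h1 : ‖(∑ j, M i j * w j)‖ ≤ ∑ j, ‖(M i j)‖ * ‖(w j)‖ := by
    refine (norm_sum_le _ _).trans ?_
    apply le_of_eq
    exact Finset.sum_congr rfl fun j _ => norm_mul _ _
  have h2 : (∑ j, ‖(M i j)‖ * ‖(w j)‖)^2
      ≤ (∑ j, ‖(M i j)‖^2) * (∑ j, ‖(w j)‖^2) :=
    Finset.sum_mul_sq_le_sq_mul_sq Finset.univ _ _
  calc Complex.normSq (∑ j, M i j * w j) = (‖(∑ j, M i j * w j)‖)^2 := by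
        rw [Complex.sq_norm]
    _ ≤ (∑ j, ‖(M i j)‖ * ‖(w j)‖)^2 := by
        apply pow_le_pow_left₀ (norm_nonneg _) h1
    _ ≤ (∑ j, ‖(M i j)‖^2) * (∑ j, ‖(w j)‖^2) := h2
    _ = (∑ j, Complex.normSq (M i j)) * (∑ j, Complex.normSq (w j)) := by
        simp [Complex.sq_norm]

end Bmat

section Proj
open Matrix
variable {N : ℕ}


lemma Bmat_isProjection (hN : 0 < N) (T : Finset (Fin N)) :
    IsProjection (∑ k ∈ T, fourierProj N k) := by
  constructor
  · unfold Matrix.IsHermitian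
    rw [Matrix.conjTranspose_sum]
    apply Finset.sum_congr rfl
    intro k _
    ext a b
    simp [fourierProj, Matrix.conjTranspose_apply, mul_comm]
  · rw [Finset.sum_mul_sum]
    calc ∑ k ∈ T, ∑ l ∈ T, fourierProj N k * fourierProj N l
        = ∑ k ∈ T, ∑ l ∈ T, (if k = l then fourierProj N k else 0) :=
          Finset.sum_congr rfl (fun k _ => Finset.sum_congr rfl fun l _ => fourierProj_mul N hN k l)
      _ = ∑ k ∈ T, (if k ∈ T then fourierProj N k else 0) :=
          Finset.sum_congr rfl (fun k _ => Finset.sum_ite_eq T k (fun _ => fourierProj N k))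
      _ = ∑ k ∈ T, fourierProj N k := Finset.sum_congr rfl fun k hk => if_pos hk

lemma Bmat_diag (hN : 0 < N) (T : Finset (Fin N)) (n : Fin N) :
    (∑ k ∈ T, fourierProj N k) n n = ((T.card / N : ℝ) : ℂ) := by
  rw [Matrix.sum_apply]
  rw [Finset.sum_congr rfl (fun k _ => fourierProj_diag N hN k n)]
  rw [Finset.sum_const, nsmul_eq_mul]
  push_cast
  ring

/-- row sums of |B i j|² for a hermitian idempotent B equal Re (B i i) -/
lemma row_normSq_eq_diag {B : Matrix (Fin N) (Fin N) ℂ} (hB : IsProjection B) (i : Fin N) :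
    ∑ j, Complex.normSq (B i j) = (B i i).re := by
  have h : (B * B) i i = B i i := by rw [hB.2]
  rw [Matrix.mul_apply] at h
  have h2 : ∀ j, B i j * B j i = (Complex.normSq (B i j) : ℂ) := by
    intro j
    have : B j i = star (B i j) := by
      conv_lhs => rw [← hB.1]
      simp [Matrix.conjTranspose_apply]
    rw [this]
    exact Complex.mul_conj _
  rw [Finset.sum_congr rfl (fun j _ => h2 j)] at h
  have := congrArg Complex.re h
  simpa using this

lemma col_normSq_eq_diag {B : Matrix (Fin N) (Fin N) ℂ} (hB : IsProjection B) (j : Fin N) :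
    ∑ i, Complex.normSq (B i j) = (B j j).re := by
  have : ∀ i, Complex.normSq (B i j) = Complex.normSq (B j i) := by
    intro i
    have : B j i = star (B i j) := by
      conv_lhs => rw [← hB.1]
      simp [Matrix.conjTranspose_apply]
    rw [this, Complex.star_def, Complex.normSq_conj]
  rw [Finset.sum_congr rfl (fun i _ => this i)]
  exact row_normSq_eq_diag hB j

end Proj

section Amat
open Matrix
variable {N : ℕ}


noncomputable def chiv (S : Finset (Fin N)) : Fin N → ℂ := fun n => if n ∈ S then 1 else 0

lemma Amat_eq (S : Finset (Fin N)) :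
    ∑ n ∈ S, posProj N n = Matrix.diagonal (chiv S) := by
  ext i j
  rw [Matrix.sum_apply]
  simp only [posProj, Matrix.single, Matrix.of_apply, Matrix.diagonal_apply, chiv]
  by_cases hij : i = j
  · subst hij
    rw [if_pos rfl]
    have : ∀ n ∈ S, (if n = i ∧ n = i then (1:ℂ) else 0) = (if n = i then 1 else 0) := by
      intro n _; by_cases h : n = i <;> simp [h]
    rw [Finset.sum_congr rfl this, Finset.sum_ite_eq' S i (fun _ => (1:ℂ))]
  · rw [if_neg hij]
    apply Finset.sum_eq_zero
    intro n hn
    have : ¬(n = i ∧ n = j) := by rintro ⟨rfl, rfl⟩; exact hij rfl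
    simp only [if_neg this]

lemma Amat_isProjection (S : Finset (Fin N)) :
    IsProjection (Matrix.diagonal (chiv S)) := by
  constructor
  · unfold Matrix.IsHermitian
    rw [Matrix.diagonal_conjTranspose]
    refine congrArg Matrix.diagonal ?_
    funext n
    show star (chiv S n) = chiv S n
    unfold chiv
    by_cases h : n ∈ S <;> simp [h]
  · rw [Matrix.diagonal_mul_diagonal]
    refine congrArg Matrix.diagonal ?_
    funext n
    show chiv S n * chiv S n = chiv S n
    unfold chiv
    by_cases h : n ∈ S <;> simp [h]

lemma normSq_chiv (S : Finset (Fin N)) (n : Fin N) :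
    Complex.normSq (chiv S n) = if n ∈ S then 1 else 0 := by
  unfold chiv
  by_cases h : n ∈ S <;> simp [h]

lemma frob_diag_mul (hN : 0 < N) (S : Finset (Fin N)) {B : Matrix (Fin N) (Fin N) ℂ}
    (hB : IsProjection B) (hdiag : ∀ i, (B i i).re = (B ⟨0, hN⟩ ⟨0, hN⟩).re) :
    ∑ i, ∑ j, Complex.normSq ((Matrix.diagonal (chiv S) * B) i j)
      = S.card * (B ⟨0, hN⟩ ⟨0, hN⟩).re := by
  have : ∀ i j, Complex.normSq ((Matrix.diagonal (chiv S) * B) i j)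
      = (if i ∈ S then 1 else 0) * Complex.normSq (B i j) := by
    intro i j
    rw [Matrix.diagonal_mul, Complex.normSq_mul, normSq_chiv]
  simp_rw [this]
  rw [Finset.sum_congr rfl (fun i _ => by rw [← Finset.mul_sum, row_normSq_eq_diag hB i, hdiag i])]
  simp_rw [ite_mul, one_mul, zero_mul]
  rw [Finset.sum_ite_mem, Finset.univ_inter, Finset.sum_const, nsmul_eq_mul]

lemma frob_mul_diag (hN : 0 < N) (S : Finset (Fin N)) {B : Matrix (Fin N) (Fin N) ℂ}
    (hB : IsProjection B) (hdiag : ∀ i, (B i i).re = (B ⟨0, hN⟩ ⟨0, hN⟩).re) :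
    ∑ i, ∑ j, Complex.normSq ((B * Matrix.diagonal (chiv S)) i j)
      = S.card * (B ⟨0, hN⟩ ⟨0, hN⟩).re := by
  have : ∀ i j, Complex.normSq ((B * Matrix.diagonal (chiv S)) i j)
      = Complex.normSq (B i j) * (if j ∈ S then 1 else 0) := by
    intro i j
    rw [Matrix.mul_diagonal, Complex.normSq_mul, normSq_chiv]
  simp_rw [this]
  rw [Finset.sum_comm]
  rw [Finset.sum_congr rfl (fun j _ => by
    rw [← Finset.sum_mul, col_normSq_eq_diag hB j, hdiag j])]
  simp_rw [mul_ite, mul_one, mul_zero]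
  rw [Finset.sum_ite_mem, Finset.univ_inter, Finset.sum_const, nsmul_eq_mul, mul_comm]

end Amat

section Key
open Matrix
variable {N : ℕ}

lemma psd_trace_nonneg {P : Matrix (Fin N) (Fin N) ℂ} (hP : P.PosSemidef) : 0 ≤ P.trace := by
  rw [Matrix.trace]
  apply Finset.sum_nonneg
  intro i _
  exact hP.diag_nonneg

lemma eig_bound {A B : Matrix (Fin N) (Fin N) ℂ} (hA : IsProjection A) (hB : IsProjection B)
    (F : ℝ) (hF : 0 ≤ F)
    (hAB : ∀ w, sqnormv ((A * B) *ᵥ w) ≤ F * sqnormv w)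
    (hBA : ∀ w, sqnormv ((B * A) *ᵥ w) ≤ F * sqnormv w)
    {μ : ℝ} {u : Fin N → ℂ} (hu : u ≠ 0) (hHu : (A + B) *ᵥ u = (μ:ℂ) • u) :
    μ ≤ 1 + Real.sqrt F := by
  set a := A *ᵥ u with ha
  set b := B *ᵥ u with hb
  have hab : a + b = (μ:ℂ) • u := by rw [ha, hb, ← Matrix.add_mulVec]; exact hHu
  have hAa : A *ᵥ a = a := by rw [ha, Matrix.mulVec_mulVec, hA.2]
  have hBb : B *ᵥ b = b := by rw [hb, Matrix.mulVec_mulVec, hB.2]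
  have hAb : A *ᵥ b = (μ:ℂ) • a - a := by
    have h := congrArg (fun v => A *ᵥ v) hab
    simp only [Matrix.mulVec_add, Matrix.mulVec_smul, hAa] at h
    linear_combination (norm := module) h
  have hBa : B *ᵥ a = (μ:ℂ) • b - b := by
    have h := congrArg (fun v => B *ᵥ v) hab
    simp only [Matrix.mulVec_add, Matrix.mulVec_smul, hBb] at h
    linear_combination (norm := module) h
  have h1 : (A * B) *ᵥ b = (μ:ℂ) • a - a := by
    rw [← Matrix.mulVec_mulVec, hBb, hAb]
  have h2 : (B * A) *ᵥ a = (μ:ℂ) • b - b := by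
    rw [← Matrix.mulVec_mulVec, hAa, hBa]
  have e1 : ∀ v : Fin N → ℂ, sqnormv ((μ:ℂ) • v - v) = (μ-1)^2 * sqnormv v := by
    intro v
    unfold sqnormv
    rw [Finset.mul_sum]
    apply Finset.sum_congr rfl
    intro i _
    have : ((μ:ℂ) • v - v) i = (((μ - 1 : ℝ)):ℂ) * v i := by
      simp [Pi.smul_apply, smul_eq_mul]
      push_cast
      ring
    rw [this, Complex.normSq_mul, Complex.normSq_ofReal]
    ring
  have key1 : (μ-1)^2 * sqnormv a ≤ F * sqnormv b := by
    have := hAB b; rw [h1, e1] at this; exact this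
  have key2 : (μ-1)^2 * sqnormv b ≤ F * sqnormv a := by
    have := hBA a; rw [h2, e1] at this; exact this
  have hsa := sqnormv_nonneg a
  have hsb := sqnormv_nonneg b
  by_cases hz : sqnormv a + sqnormv b = 0
  · have ha0 : a = 0 := sqnormv_eq_zero (by linarith)
    have hb0 : b = 0 := sqnormv_eq_zero (by linarith)
    have h3 : (μ:ℂ) • u = 0 := by rw [← hab, ha0, hb0]; simp
    obtain ⟨i, hi⟩ := Function.ne_iff.mp hu
    have : (μ:ℂ) * u i = 0 := congrFun h3 i
    have hμ : μ = 0 := by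
      rcases mul_eq_zero.mp this with h | h
      · exact_mod_cast h
      · exact absurd h hi
    rw [hμ]
    linarith [Real.sqrt_nonneg F]
  · have hpos : 0 < sqnormv a + sqnormv b := lt_of_le_of_ne (by linarith) (Ne.symm hz)
    have h3 : (μ-1)^2 * (sqnormv a + sqnormv b) ≤ F * (sqnormv a + sqnormv b) := by
      nlinarith [key1, key2]
    have h4 : (μ-1)^2 ≤ F := le_of_mul_le_mul_right (by linarith [h3]) hpos
    nlinarith [Real.sq_sqrt hF, Real.sqrt_nonneg F]

end Key

section Key2
open Matrix
variable {N : ℕ}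

lemma smul_one_sub_psd {H : Matrix (Fin N) (Fin N) ℂ} (hH : H.IsHermitian) (c : ℝ)
    (hc : ∀ i, hH.eigenvalues i ≤ c) :
    ((c:ℂ) • (1 : Matrix (Fin N) (Fin N) ℂ) - H).PosSemidef := by
  set U : Matrix (Fin N) (Fin N) ℂ := (hH.eigenvectorUnitary : Matrix (Fin N) (Fin N) ℂ) with hU
  have hUU : U * star U = 1 := (Matrix.mem_unitaryGroup_iff).mp hH.eigenvectorUnitary.2
  have hdiag : Matrix.diagonal (fun i => ((c - hH.eigenvalues i : ℝ) : ℂ))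
      = (c:ℂ) • (1 : Matrix (Fin N) (Fin N) ℂ) - Matrix.diagonal (RCLike.ofReal ∘ hH.eigenvalues) := by
    ext i j
    rcases eq_or_ne i j with rfl | h
    · simp [Matrix.diagonal_apply_eq, Matrix.one_apply_eq]
    · simp [Matrix.diagonal_apply_ne _ h, Matrix.one_apply_ne h]
  have key : (c:ℂ) • (1 : Matrix (Fin N) (Fin N) ℂ) - H =
      U * Matrix.diagonal (fun i => ((c - hH.eigenvalues i : ℝ) : ℂ)) * star U := by
    rw [hdiag, Matrix.mul_sub, Matrix.sub_mul]
    rw [Matrix.mul_smul, mul_one, Matrix.smul_mul, hUU]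
    congr 1
    rw [hU]
    exact hH.spectral_theorem
  rw [key]
  have hd : (Matrix.diagonal (fun i => ((c - hH.eigenvalues i : ℝ) : ℂ))).PosSemidef := by
    rw [Matrix.posSemidef_diagonal_iff]
    intro i
    rw [Complex.zero_le_real]
    linarith [hc i]
  have := hd.mul_mul_conjTranspose_same U
  rwa [Matrix.star_eq_conjTranspose] at *

lemma trace_sum_le {A B ρ : Matrix (Fin N) (Fin N) ℂ}
    (hA : IsProjection A) (hB : IsProjection B)
    (hρ : ρ.PosSemidef) (hρtr : ρ.trace = 1) (F : ℝ) (hF : 0 ≤ F)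
    (hAB : ∀ w, sqnormv ((A * B) *ᵥ w) ≤ F * sqnormv w)
    (hBA : ∀ w, sqnormv ((B * A) *ᵥ w) ≤ F * sqnormv w) :
    ((ρ * A).trace).re + ((ρ * B).trace).re ≤ 1 + Real.sqrt F := by
  set H := A + B with hHdef
  have hH : H.IsHermitian := hA.1.add hB.1
  set c : ℝ := 1 + Real.sqrt F with hc
  have heig : ∀ i, hH.eigenvalues i ≤ c := by
    intro i
    have hvec : H *ᵥ ⇑(hH.eigenvectorBasis i) = ((hH.eigenvalues i : ℝ) : ℂ) • ⇑(hH.eigenvectorBasis i) := by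
      rw [hH.mulVec_eigenvectorBasis i]
      funext j
      simp [Pi.smul_apply, Complex.real_smul]
    have hne : ⇑(hH.eigenvectorBasis i) ≠ (0 : Fin N → ℂ) := by
      intro h
      have h1 : hH.eigenvectorBasis i = 0 := by
        ext j
        exact congrFun h j
      have h2 := hH.eigenvectorBasis.orthonormal.1 i
      rw [h1] at h2
      simp at h2
    exact eig_bound hA hB F hF hAB hBA hne hvec
  have hM : ((c:ℂ) • (1 : Matrix (Fin N) (Fin N) ℂ) - H).PosSemidef := smul_one_sub_psd hH c heig
  obtain ⟨C, hC⟩ : ∃ C : Matrix (Fin N) (Fin N) ℂ, ρ = Cᴴ * C := by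
    classical
    open scoped MatrixOrder in
    obtain ⟨X, hX, -, hXX⟩ := sub_zero ρ ▸ CFC.exists_sqrt_of_isSelfAdjoint_of_quasispectrumRestricts hρ.isHermitian
      (QuasispectrumRestricts.nnreal_of_nonneg (Matrix.nonneg_iff_posSemidef.mpr hρ))
    exact ⟨X, by rw [← sub_zero ρ, ← hXX]; conv_rhs => rw [show Xᴴ = star X from rfl, hX.star_eq]⟩
  have h0 : 0 ≤ (ρ * ((c:ℂ) • (1 : Matrix (Fin N) (Fin N) ℂ) - H)).trace := by
    rw [hC, Matrix.mul_assoc, Matrix.trace_mul_comm]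
    exact psd_trace_nonneg (hM.mul_mul_conjTranspose_same C)
  have hexp : (ρ * ((c:ℂ) • (1 : Matrix (Fin N) (Fin N) ℂ) - H)).trace
      = (c:ℂ) - (ρ * A).trace - (ρ * B).trace := by
    rw [Matrix.mul_sub, Matrix.trace_sub, hHdef, Matrix.mul_add, Matrix.trace_add]
    rw [Matrix.mul_smul, Matrix.trace_smul, mul_one, hρtr]
    simp [smul_eq_mul]
    ring
  rw [hexp] at h0
  have hre := (Complex.le_def.mp h0).1
  simp only [Complex.zero_re, Complex.sub_re, Complex.ofReal_re] at hre
  linarith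

section Ball
open Real


lemma mod_small_cases (N a : ℕ) (hN : 0 < N) (h : a < 2*N) :
    a % N = if a < N then a else a - N := by
  by_cases h1 : a < N
  · rw [if_pos h1, Nat.mod_eq_of_lt h1]
  · rw [if_neg h1, Nat.mod_eq_sub_mod (by omega), Nat.mod_eq_of_lt (by omega)]

lemma ball_card {N : ℕ} (hN : 2 ≤ N) (x : Fin N) (w : ℝ) (hw : 0 < w) :
    ((ballF (torusDist N) x w).card : ℝ) ≤ w * N / (2 * Real.pi) + 1 := by
  have hπ := Real.pi_pos
  have hN0 : (0:ℝ) < N := by positivity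
  have hNn : 0 < N := by omega
  have hxlt := x.isLt
  set t := Nat.floor (w * N / (4 * Real.pi)) with ht
  have hcR : 0 ≤ w * N / (4 * Real.pi) := by positivity
  have htle : (t:ℝ) ≤ w * N / (4 * Real.pi) := Nat.floor_le hcR
  -- membership → min ≤ t
  have hmem : ∀ y ∈ ballF (torusDist N) x w,
      min ((x.val + N - y.val) % N) ((y.val + N - x.val) % N) ≤ t := by
    intro y hy
    rw [ballF, Finset.mem_filter] at hy
    have hd := hy.2
    rw [torusDist] at hd
    set m : ℕ := min ((x.val + N - y.val) % N) ((y.val + N - x.val) % N)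
    rw [div_mul_eq_mul_div, div_le_iff₀ hN0] at hd
    have : (m:ℝ) ≤ w * N / (4 * Real.pi) := by
      rw [le_div_iff₀ (by positivity)]
      nlinarith
    exact Nat.le_floor this
  classical
  set F1 : Finset (Fin N) := Finset.univ.filter (fun y => (y.val + N - x.val) % N ≤ t) with hF1
  set F2 : Finset (Fin N) := Finset.univ.filter
      (fun y => 1 ≤ (x.val + N - y.val) % N ∧ (x.val + N - y.val) % N ≤ t) with hF2
  have hsub : ballF (torusDist N) x w ⊆ F1 ∪ F2 := by
    intro y hy
    have hm := hmem y hy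
    have hylt := y.isLt
    rw [Finset.mem_union, hF1, hF2, Finset.mem_filter, Finset.mem_filter]
    by_cases h1 : (y.val + N - x.val) % N ≤ t
    · exact Or.inl ⟨Finset.mem_univ y, h1⟩
    · have h2 : (x.val + N - y.val) % N ≤ t := by omega
      have e1 := mod_small_cases N (y.val + N - x.val) hNn (by omega)
      have e2 := mod_small_cases N (x.val + N - y.val) hNn (by omega)
      have : 1 ≤ (x.val + N - y.val) % N := by
        rcases Nat.eq_zero_or_pos ((x.val + N - y.val) % N) with h0 | h0
        · exfalso
          have hxy : x.val = y.val := by split at e2 <;> omega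
          split at e1 <;> omega
        · exact h0
      exact Or.inr ⟨Finset.mem_univ y, this, h2⟩
  have c1 : F1.card ≤ t + 1 := by
    have : F1.card ≤ (Finset.range (t+1)).card := by
      apply Finset.card_le_card_of_injOn (fun y => (y.val + N - x.val) % N)
      · intro y hy
        rw [hF1, Finset.mem_coe, Finset.mem_filter] at hy
        simp only [Finset.mem_coe, Finset.mem_range]
        omega
      · intro y1 hy1 y2 hy2 hh
        have hh' : (y1.val + N - x.val) % N = (y2.val + N - x.val) % N := hh
        have e1 := mod_small_cases N (y1.val + N - x.val) hNn (by have := y1.isLt; omega)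
        have e2 := mod_small_cases N (y2.val + N - x.val) hNn (by have := y2.isLt; omega)
        have h1 := y1.isLt
        have h2 := y2.isLt
        apply Fin.ext
        split at e1 <;> split at e2 <;> omega
    simpa using this
  have c2 : F2.card ≤ t := by
    have : F2.card ≤ (Finset.Icc 1 t).card := by
      apply Finset.card_le_card_of_injOn (fun y => (x.val + N - y.val) % N)
      · intro y hy
        rw [hF2, Finset.mem_coe, Finset.mem_filter] at hy
        simp only [Finset.mem_coe, Finset.mem_Icc]
        exact hy.2
      · intro y1 hy1 y2 hy2 hh
        have hh' : (x.val + N - y1.val) % N = (x.val + N - y2.val) % N := hh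
        have e1 := mod_small_cases N (x.val + N - y1.val) hNn (by have := y1.isLt; omega)
        have e2 := mod_small_cases N (x.val + N - y2.val) hNn (by have := y2.isLt; omega)
        have h1 := y1.isLt
        have h2 := y2.isLt
        apply Fin.ext
        split at e1 <;> split at e2 <;> omega
    simpa using this
  have hcard : (ballF (torusDist N) x w).card ≤ 2 * t + 1 := by
    calc (ballF (torusDist N) x w).card ≤ (F1 ∪ F2).card := Finset.card_le_card hsub
      _ ≤ F1.card + F2.card := Finset.card_union_le _ _
      _ ≤ 2 * t + 1 := by omega
  have : ((ballF (torusDist N) x w).card : ℝ) ≤ 2 * (t:ℝ) + 1 := by exact_mod_cast hcard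
  calc ((ballF (torusDist N) x w).card : ℝ) ≤ 2 * (t:ℝ) + 1 := this
    _ ≤ 2 * (w * N / (4 * Real.pi)) + 1 := by linarith
    _ = w * N / (2 * Real.pi) + 1 := by field_simp; ring

lemma ball_univ {N : ℕ} (hN : 2 ≤ N) (x : Fin N) :
    ballF (torusDist N) x (4 * Real.pi + 1) = Finset.univ := by
  have hπ := Real.pi_pos
  have hN0 : (0:ℝ) < N := by positivity
  apply Finset.eq_univ_of_forall
  intro y
  rw [ballF, Finset.mem_filter]
  refine ⟨Finset.mem_univ y, ?_⟩
  rw [torusDist]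
  set m : ℕ := min ((x.val + N - y.val) % N) ((y.val + N - x.val) % N)
  have hm : m ≤ N := by
    have := Nat.mod_lt (x.val + N - y.val) (show 0 < N by omega)
    have := Nat.mod_lt (y.val + N - x.val) (show 0 < N by omega)
    omega
  have hmR : (m:ℝ) ≤ N := by exact_mod_cast hm
  rw [div_mul_eq_mul_div, div_le_div_iff₀ hN0 (by norm_num : (0:ℝ) < 2)]
  nlinarith
end Ball



section Pair
open Matrix Real

lemma trace_sum_eq_trace_Amat {N : ℕ} (ρ : Matrix (Fin N) (Fin N) ℂ) (S : Finset (Fin N)) :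
    ∑ y ∈ S, ((ρ * posProj N y).trace).re = ((ρ * Matrix.diagonal (chiv S)).trace).re := by
  rw [← Amat_eq, Finset.mul_sum, Matrix.trace_sum, Complex.re_sum]

lemma trace_sum_eq_trace_Bmat {N : ℕ} (ρ : Matrix (Fin N) (Fin N) ℂ) (T : Finset (Fin N)) :
    ∑ k ∈ T, ((ρ * fourierProj N k).trace).re = ((ρ * ∑ k ∈ T, fourierProj N k).trace).re := by
  rw [Finset.mul_sum, Matrix.trace_sum, Complex.re_sum]

lemma pair_bound {N : ℕ} (hN : 2 ≤ N)
    (ρ : Matrix (Fin N) (Fin N) ℂ) (hρ : IsDensity ρ)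
    (ε₁ ε₂ : ℝ) (hε : ε₁ + ε₂ ≤ 1) (w₁ w₂ : ℝ)
    (hw₁ : 0 < w₁ ∧ ∃ x : Fin N, 1 - ε₁ ≤
      ∑ y ∈ ballF (torusDist N) x w₁, ((ρ * posProj N y).trace).re)
    (hw₂ : 0 < w₂ ∧ ∃ x : Fin N, 1 - ε₂ ≤
      ∑ y ∈ ballF (torusDist N) x w₂, ((ρ * fourierProj N y).trace).re) :
    (2 * Real.pi) ^ 2 / N * (1 - ε₁ - ε₂) ^ 2 ≤
      (w₁ + 2 * Real.pi / N) * (w₂ + 2 * Real.pi / N) := by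
  obtain ⟨hw1pos, x₁, hx₁⟩ := hw₁
  obtain ⟨hw2pos, x₂, hx₂⟩ := hw₂
  have hNn : 0 < N := by omega
  have hπ := Real.pi_pos
  have hN0 : (0:ℝ) < N := by positivity
  set S : Finset (Fin N) := ballF (torusDist N) x₁ w₁ with hS
  set T : Finset (Fin N) := ballF (torusDist N) x₂ w₂ with hT
  set A : Matrix (Fin N) (Fin N) ℂ := Matrix.diagonal (chiv S) with hAdef
  set B : Matrix (Fin N) (Fin N) ℂ := ∑ k ∈ T, fourierProj N k with hBdef
  have hA : IsProjection A := Amat_isProjection S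
  have hB : IsProjection B := Bmat_isProjection hNn T
  have h1 : 1 - ε₁ ≤ ((ρ * A).trace).re := by
    rw [hAdef, ← trace_sum_eq_trace_Amat]
    exact hx₁
  have h2 : 1 - ε₂ ≤ ((ρ * B).trace).re := by
    rw [hBdef, ← trace_sum_eq_trace_Bmat]
    exact hx₂
  set F : ℝ := (S.card : ℝ) * ((T.card : ℝ) / N) with hFdef
  have hF : 0 ≤ F := by positivity
  have hBdiag : ∀ i, (B i i).re = (B ⟨0, hNn⟩ ⟨0, hNn⟩).re := by
    intro i
    rw [hBdef, Bmat_diag hNn T i, Bmat_diag hNn T ⟨0, hNn⟩]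
  have hB00 : (B ⟨0, hNn⟩ ⟨0, hNn⟩).re = (T.card : ℝ) / N := by
    rw [hBdef, Bmat_diag hNn T ⟨0, hNn⟩, Complex.ofReal_re]
  have hfrobAB : ∑ i, ∑ j, Complex.normSq ((A * B) i j) = F := by
    rw [hAdef, frob_diag_mul hNn S hB hBdiag, hB00]
  have hfrobBA : ∑ i, ∑ j, Complex.normSq ((B * A) i j) = F := by
    rw [hAdef, frob_mul_diag hNn S hB hBdiag, hB00]
  have hAB : ∀ w, sqnormv ((A * B) *ᵥ w) ≤ F * sqnormv w := by
    intro w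
    have := sqnorm_mulVec_le (A * B) w
    rwa [hfrobAB] at this
  have hBA : ∀ w, sqnormv ((B * A) *ᵥ w) ≤ F * sqnormv w := by
    intro w
    have := sqnorm_mulVec_le (B * A) w
    rwa [hfrobBA] at this
  have key := trace_sum_le hA hB hρ.1 hρ.2 F hF hAB hBA
  have hs : 1 - ε₁ - ε₂ ≤ Real.sqrt F := by linarith
  have hsq : (1 - ε₁ - ε₂)^2 ≤ F := by
    nlinarith [Real.sq_sqrt hF, Real.sqrt_nonneg F]
  have hScard : (S.card : ℝ) ≤ w₁ * N / (2 * Real.pi) + 1 := ball_card hN x₁ w₁ hw1pos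
  have hTcard : (T.card : ℝ) ≤ w₂ * N / (2 * Real.pi) + 1 := ball_card hN x₂ w₂ hw2pos
  have h5 : F ≤ (w₁ * N / (2 * Real.pi) + 1) * ((w₂ * N / (2 * Real.pi) + 1) / N) := by
    rw [hFdef]
    gcongr
  calc (2 * Real.pi) ^ 2 / N * (1 - ε₁ - ε₂) ^ 2
      ≤ (2 * Real.pi) ^ 2 / N * F := by gcongr
    _ ≤ (2 * Real.pi) ^ 2 / N * ((w₁ * N / (2 * Real.pi) + 1) * ((w₂ * N / (2 * Real.pi) + 1) / N)) := by
        gcongr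
    _ = (w₁ + 2 * Real.pi / N) * (w₂ + 2 * Real.pi / N) := by
        field_simp

end Pair

/-- Uncertainty relation for position and momentum on a torus:
    (W_{ε₁}(ρ^Q) + 2π/N)·(W_{ε₂}(ρ^P) + 2π/N) ≥ (2π)²/N·(1-ε₁-ε₂)²,
    i.e. 2πħ(1-ε₁-ε₂)² with ħ = 2π/N. -/
theorem torus_width_tradeoff {N : ℕ} (hN : 2 ≤ N)
    (ρ : Matrix (Fin N) (Fin N) ℂ) (hρ : IsDensity ρ)
    (ε₁ ε₂ : ℝ) (hε₁ : ε₁ ∈ Set.Icc (0 : ℝ) 1) (hε₂ : ε₂ ∈ Set.Icc (0 : ℝ) 1)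
    (hε : ε₁ + ε₂ ≤ 1) :
    (2 * Real.pi) ^ 2 / N * (1 - ε₁ - ε₂) ^ 2 ≤
      (widthF (torusDist N) ε₁ (fun n => ((ρ * posProj N n).trace).re)
          + 2 * Real.pi / N) *
      (widthF (torusDist N) ε₂ (fun k => ((ρ * fourierProj N k).trace).re)
          + 2 * Real.pi / N) := by
  have hNn : 0 < N := by omega
  have hπ := Real.pi_pos
  have hN0 : (0:ℝ) < N := by positivity
  have hε₁0 := hε₁.1
  have hε₂0 := hε₂.1
  set c : ℝ := 2 * Real.pi / N with hc
  have hcpos : 0 < c := by positivity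
  set K : ℝ := (2 * Real.pi) ^ 2 / N * (1 - ε₁ - ε₂) ^ 2 with hK
  set p₁ : Fin N → ℝ := fun n => ((ρ * posProj N n).trace).re with hp₁
  set p₂ : Fin N → ℝ := fun k => ((ρ * fourierProj N k).trace).re with hp₂
  set S₁ : Set ℝ := {w : ℝ | 0 < w ∧ ∃ x : Fin N, 1 - ε₁ ≤ ∑ y ∈ ballF (torusDist N) x w, p₁ y}
    with hS₁
  set S₂ : Set ℝ := {w : ℝ | 0 < w ∧ ∃ x : Fin N, 1 - ε₂ ≤ ∑ y ∈ ballF (torusDist N) x w, p₂ y}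
    with hS₂
  have hW₁ : widthF (torusDist N) ε₁ p₁ = sInf S₁ := rfl
  have hW₂ : widthF (torusDist N) ε₂ p₂ = sInf S₂ := rfl
  -- nonemptiness
  have hx0 : Fin N := ⟨0, hNn⟩
  have hsum₁ : ∑ y : Fin N, p₁ y = 1 := by
    have h := trace_sum_eq_trace_Amat ρ (Finset.univ : Finset (Fin N))
    have hchi : chiv (Finset.univ : Finset (Fin N)) = fun _ => (1:ℂ) :=
      funext fun n => if_pos (Finset.mem_univ n)
    rw [hchi] at h
    rw [hp₁, h]
    rw [show Matrix.diagonal (fun _ => (1:ℂ)) = (1 : Matrix (Fin N) (Fin N) ℂ) from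
      Matrix.diagonal_one, mul_one, hρ.2]
    simp
  have hsum₂ : ∑ y : Fin N, p₂ y = 1 := by
    have h := trace_sum_eq_trace_Bmat ρ (Finset.univ : Finset (Fin N))
    rw [hp₂, h, sum_fourierProj N hNn, mul_one, hρ.2]
    simp
  have hne₁ : S₁.Nonempty := by
    refine ⟨4 * Real.pi + 1, ⟨by positivity, ⟨0, hNn⟩, ?_⟩⟩
    rw [ball_univ hN]
    rw [hsum₁]
    linarith
  have hne₂ : S₂.Nonempty := by
    refine ⟨4 * Real.pi + 1, ⟨by positivity, ⟨0, hNn⟩, ?_⟩⟩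
    rw [ball_univ hN]
    rw [hsum₂]
    linarith
  have KP : ∀ w₁ ∈ S₁, ∀ w₂ ∈ S₂, K ≤ (w₁ + c) * (w₂ + c) := by
    intro w₁ hw₁ w₂ hw₂
    exact pair_bound hN ρ hρ ε₁ ε₂ hε w₁ w₂ hw₁ hw₂
  rw [hW₁, hW₂]
  have hW₂0 : 0 ≤ sInf S₂ := le_csInf hne₂ (fun w hw => hw.1.le)
  have hW₂c : 0 < sInf S₂ + c := by linarith
  have step1 : ∀ w₁ ∈ S₁, K ≤ (w₁ + c) * (sInf S₂ + c) := by
    intro w₁ hw₁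
    have hw1c : 0 < w₁ + c := by linarith [hw₁.1]
    have hle : K / (w₁ + c) - c ≤ sInf S₂ := by
      apply le_csInf hne₂
      intro w₂ hw₂
      have h := KP w₁ hw₁ w₂ hw₂
      have h2 : K ≤ (w₂ + c) * (w₁ + c) := by linarith [h, mul_comm (w₁ + c) (w₂ + c)]
      have h3 : K / (w₁ + c) ≤ w₂ + c := (div_le_iff₀ hw1c).mpr h2
      linarith
    have h4 : K / (w₁ + c) ≤ sInf S₂ + c := by linarith
    have h5 : K ≤ (sInf S₂ + c) * (w₁ + c) := (div_le_iff₀ hw1c).mp h4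
    linarith [mul_comm (sInf S₂ + c) (w₁ + c), h5]
  have step2 : K / (sInf S₂ + c) - c ≤ sInf S₁ := by
    apply le_csInf hne₁
    intro w₁ hw₁
    have h := step1 w₁ hw₁
    have h3 : K / (sInf S₂ + c) ≤ w₁ + c := by
      rw [div_le_iff₀ hW₂c]
      linarith [mul_comm (w₁ + c) (sInf S₂ + c), h]
    linarith
  have h6 : K / (sInf S₂ + c) ≤ sInf S₁ + c := by linarith
  have h7 : K ≤ (sInf S₁ + c) * (sInf S₂ + c) := (div_le_iff₀ hW₂c).mp h6
  exact h7
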